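/- arXiv:math/9201207 — 5 statements merged into one kernel-verified Lean document; each statement's English description precedes it below -/
import Mathlib

section
/- Let μ be a finite measure on a finite set Ω. Then for every function y : Ω → ℝ, ‖y‖_{2,1} ≤ ‖y‖_∞^{1/2} · ‖y‖_1^{1/2}, where ‖y‖_∞ = max_{ω∈Ω} |y(ω)| and ‖y‖_1 = ∑_{ω∈Ω} |y(ω)| μ({ω}). -/
open scoped BigOperators

/-- The Lorentz `L_{2,1}` norm of `f` with respect to the weights `w` on a finite set:
`∫_0^∞ μ(|f| > t)^{1/2} dt`. -/
noncomputable def lorentz21 {Ω : Type*} [Fintype Ω] (w : Ω → ℝ) (f : Ω → ℝ) : ℝ :=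
  ∫ t in Set.Ioi (0 : ℝ), Real.sqrt (∑ ω, if t < |f ω| then w ω else 0)

/-!
Let `M = ‖y‖_∞` and let `d(t) = μ(|y| > t)` be the distribution function. Since `d` vanishes
for `t ≥ M`, the Lorentz norm is `∫_{(0,M]} √d`, and Jensen's inequality for the concave square
root on the interval `(0, M]` of length `M` bounds this by `√M · √(∫_{(0,M]} d)`. By the
layer-cake formula `∫_{(0,M]} d = ∑ |y ω| μ{ω} = ‖y‖_1`.
-/

open MeasureTheory Set

theorem integral_sqrt_le_sqrt_mul_sqrt {α : Type*} [MeasurableSpace α] {μ : Measure α}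
    [IsFiniteMeasure μ] {f : α → ℝ} (hf : Integrable f μ) (hf0 : 0 ≤ᵐ[μ] f) :
    ∫ x, √(f x) ∂μ ≤ √(μ.real univ) * √(∫ x, f x ∂μ) := by
  rcases eq_zero_or_neZero μ with rfl | hμ
  · simp
  have hsqrt : Integrable (fun x => √(f x)) μ := by
    refine ((integrable_const 1).add hf).mono'
      hf.aestronglyMeasurable.aemeasurable.sqrt.aestronglyMeasurable ?_
    filter_upwards [hf0] with x (hx : 0 ≤ f x)
    rw [Real.norm_eq_abs, abs_of_nonneg (Real.sqrt_nonneg _), Pi.add_apply]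
    nlinarith [Real.sq_sqrt hx, Real.sqrt_nonneg (f x)]
  have hjensen : ⨍ x, √(f x) ∂μ ≤ √(⨍ x, f x ∂μ) :=
    Real.strictConcaveOn_sqrt.concaveOn.le_map_average Real.continuous_sqrt.continuousOn
      isClosed_Ici hf0 hf hsqrt
  have hV : 0 < μ.real univ := by
    simp [measureReal_def, ENNReal.toReal_pos_iff, measure_lt_top, NeZero.ne]
  rw [average_eq, average_eq, smul_eq_mul, smul_eq_mul, Real.sqrt_mul (inv_nonneg.2 hV.le),
    Real.sqrt_inv] at hjensen
  have hsV : √(μ.real univ) ≠ 0 := (Real.sqrt_pos.2 hV).ne'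
  calc ∫ x, √(f x) ∂μ = μ.real univ * ((μ.real univ)⁻¹ * ∫ x, √(f x) ∂μ) := by field_simp
    _ ≤ μ.real univ * ((√(μ.real univ))⁻¹ * √(∫ x, f x ∂μ)) := by gcongr
    _ = √(μ.real univ) * √(∫ x, f x ∂μ) := by
      field_simp; rw [Real.sq_sqrt hV.le]

theorem setIntegral_Ioc_ite_lt {a M : ℝ} (ha : 0 ≤ a) (haM : a ≤ M) (c : ℝ) :
    ∫ t in Ioc 0 M, (if t < a then c else 0) = a * c := by
  have hset : Ioc 0 M ∩ Iio a = Ioo 0 a := by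
    ext t
    simp only [mem_inter_iff, mem_Ioc, mem_Iio, mem_Ioo]
    exact ⟨fun ⟨⟨h0, _⟩, ha⟩ => ⟨h0, ha⟩, fun ⟨h0, ha⟩ => ⟨⟨h0, ha.le.trans haM⟩, ha⟩⟩
  calc ∫ t in Ioc 0 M, (if t < a then c else 0)
      = ∫ t in Ioc 0 M, (Iio a).indicator (fun _ => c) t := by
        simp only [indicator_apply, mem_Iio]
    _ = a * c := by
      rw [setIntegral_indicator measurableSet_Iio, hset, setIntegral_const,
        Real.volume_real_Ioo_of_le ha, sub_zero, smul_eq_mul]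

theorem integrableOn_Ioc_ite_lt (a M c : ℝ) :
    IntegrableOn (fun t : ℝ => if t < a then c else 0) (Ioc 0 M) := by
  refine Measure.integrableOn_of_bounded (M := |c|) measure_Ioc_lt_top.ne
    (Measurable.ite measurableSet_Iio measurable_const measurable_const).aestronglyMeasurable
    (ae_of_all _ fun t => ?_)
  split_ifs <;> simp

section distribution

variable {Ω : Type*} [Fintype Ω]

/-- The distribution function `t ↦ μ(|f| > t)` of `f` for the measure with point masses `w`. -/
noncomputable def distribution (w f : Ω → ℝ) (t : ℝ) : ℝ :=
  ∑ ω, if t < |f ω| then w ω else 0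

theorem distribution_nonneg {w : Ω → ℝ} (hw : ∀ ω, 0 ≤ w ω) (f : Ω → ℝ) (t : ℝ) :
    0 ≤ distribution w f t :=
  Finset.sum_nonneg fun ω _ => by split_ifs <;> simp [hw ω]

theorem distribution_eq_zero_of_le {f : Ω → ℝ} {t : ℝ} (h : ∀ ω, |f ω| ≤ t) (w : Ω → ℝ) :
    distribution w f t = 0 :=
  Finset.sum_eq_zero fun ω _ => if_neg (h ω).not_gt

theorem integrableOn_distribution (w f : Ω → ℝ) (M : ℝ) :
    IntegrableOn (distribution w f) (Ioc 0 M) := by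
  unfold distribution
  exact integrable_finsetSum _ fun ω _ => integrableOn_Ioc_ite_lt _ _ _

theorem setIntegral_distribution {f : Ω → ℝ} {M : ℝ} (hM : ∀ ω, |f ω| ≤ M) (w : Ω → ℝ) :
    ∫ t in Ioc 0 M, distribution w f t = ∑ ω, |f ω| * w ω := by
  unfold distribution
  rw [integral_finsetSum _ fun ω _ => integrableOn_Ioc_ite_lt _ _ _]
  exact Finset.sum_congr rfl fun ω _ => setIntegral_Ioc_ite_lt (abs_nonneg _) (hM ω) _

theorem lorentz21_eq_setIntegral_Ioc {f : Ω → ℝ} {M : ℝ} (hM : ∀ ω, |f ω| ≤ M) (w : Ω → ℝ) :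
    lorentz21 w f = ∫ t in Ioc 0 M, √(distribution w f t) :=
  setIntegral_eq_of_subset_of_forall_sdiff_eq_zero measurableSet_Ioi Ioc_subset_Ioi_self
    fun t ht => by
      have hMt : M ≤ t := not_lt.1 fun h => ht.2 ⟨ht.1, h.le⟩
      change √(distribution w f t) = 0
      rw [distribution_eq_zero_of_le (fun ω => (hM ω).trans hMt), Real.sqrt_zero]

end distribution

theorem stmt3 (Ω : Type) [Fintype Ω] (w : Ω → ℝ) (hw : ∀ ω, 0 ≤ w ω) (y : Ω → ℝ) :
    lorentz21 w y ≤ Real.sqrt ‖y‖ * Real.sqrt (∑ ω, |y ω| * w ω) := by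
  have hy : ∀ ω, |y ω| ≤ ‖y‖ := fun ω =>
    (Real.norm_eq_abs (y ω)).symm.trans_le (norm_le_pi_norm y ω)
  have : IsFiniteMeasure (volume.restrict (Ioc (0 : ℝ) ‖y‖)) :=
    isFiniteMeasure_restrict.2 measure_Ioc_lt_top.ne
  rw [lorentz21_eq_setIntegral_Ioc hy, ← setIntegral_distribution hy]
  convert integral_sqrt_le_sqrt_mul_sqrt (integrableOn_distribution w y ‖y‖)
    (ae_of_all _ (distribution_nonneg hw y)) using 3
  simp [Real.volume_real_Ioc_of_le (norm_nonneg y)]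
end

section
/- There exists a universal constant c₃ > 0 with the following property. Let μ be a finite measure on a finite set Ω such that every point ω ∈ Ω satisfies μ({ω}) ≥ a for some a > 0. Then for every z : Ω → ℝ, ‖z‖_{2,1} ≤ c₃ · (1 + √(log(μ(Ω)/a))) · ‖z‖_2, where ‖z‖_2 = (∑_{ω∈Ω} |z(ω)|² μ({ω}))^{1/2}. -/
/-
Write `F(t) = μ(|z| > t)`, which vanishes for `t ≥ T = ‖z‖₂ / √a`. For any `t₀ > 0`,
Cauchy–Schwarz against the weight `t + t₀` gives
`∫₀^T √F ≤ (∫₀^T (t + t₀) F(t) dt)^{1/2} · (log ((T + t₀) / t₀))^{1/2}`.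
By the layer-cake formula the first integral is `∑ w (|z|² / 2 + t₀ |z|)`, which is at most
`(3/2) ‖z‖₂²` for `t₀ = ‖z‖₂ / √μ(Ω)` by Cauchy–Schwarz on `Ω`; with this choice
`(T + t₀) / t₀ = 1 + √(μ(Ω) / a)`, whose logarithm is at most `1 + log₂ (μ(Ω) / a)`.
-/

open scoped BigOperators

open MeasureTheory Set Real

lemma sqrt_mul_le_add_div_two {c x y : ℝ} (hc : 0 < c) (hx : 0 ≤ x) (hy : 0 ≤ y) :
    √(x * y) ≤ (c * x + c⁻¹ * y) / 2 := by
  have hsplit : √(x * y) = √(c * x) * √(c⁻¹ * y) := by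
    rw [← sqrt_mul (by positivity), mul_mul_mul_comm, mul_inv_cancel₀ hc.ne', one_mul]
  have := two_mul_le_add_sq (√(c * x)) (√(c⁻¹ * y))
  rw [sq_sqrt (by positivity), sq_sqrt (by positivity)] at this
  linarith

theorem integral_sqrt_mul_le_sqrt_mul_sqrt {α : Type*} [MeasurableSpace α] {μ : Measure α}
    {f g : α → ℝ} (hf₀ : 0 ≤ᵐ[μ] f) (hg₀ : 0 ≤ᵐ[μ] g) (hf : Integrable f μ)
    (hg : Integrable g μ) :
    ∫ x, √(f x * g x) ∂μ ≤ √(∫ x, f x ∂μ) * √(∫ x, g x ∂μ) := by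
  by_cases hzero : ∫ x, f x ∂μ = 0 ∨ ∫ x, g x ∂μ = 0
  · have : (fun x => √(f x * g x)) =ᵐ[μ] 0 := by
      rcases hzero with h | h
      · filter_upwards [(integral_eq_zero_iff_of_nonneg_ae hf₀ hf).1 h] with x hx
        simp [hx]
      · filter_upwards [(integral_eq_zero_iff_of_nonneg_ae hg₀ hg).1 h] with x hx
        simp [hx]
    rw [integral_eq_zero_of_ae this]
    positivity
  rw [not_or] at hzero
  have hA := (integral_nonneg_of_ae hf₀).lt_of_ne' hzero.1
  have hB := (integral_nonneg_of_ae hg₀).lt_of_ne' hzero.2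
  obtain ⟨p, hp, hpA⟩ : ∃ p, 0 < p ∧ p ^ 2 = ∫ x, f x ∂μ := ⟨_, sqrt_pos.2 hA, sq_sqrt hA.le⟩
  obtain ⟨q, hq, hqB⟩ : ∃ q, 0 < q ∧ q ^ 2 = ∫ x, g x ∂μ := ⟨_, sqrt_pos.2 hB, sq_sqrt hB.le⟩
  rw [← hpA, ← hqB]
  -- pointwise AM-GM with the weight `q / p` that balances the two integrals
  have hc : 0 < q / p := div_pos hq hp
  calc ∫ x, √(f x * g x) ∂μ ≤ ∫ x, (q / p * f x + (q / p)⁻¹ * g x) / 2 ∂μ := by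
        refine integral_mono_of_nonneg (ae_of_all _ fun _ => sqrt_nonneg _)
          (((hf.const_mul _).add (hg.const_mul _)).div_const 2) ?_
        filter_upwards [hf₀, hg₀] with x hfx hgx
        exact sqrt_mul_le_add_div_two hc hfx hgx
    _ = (q / p * p ^ 2 + (q / p)⁻¹ * q ^ 2) / 2 := by
        rw [integral_div, integral_add (hf.const_mul _) (hg.const_mul _),
          integral_const_mul, integral_const_mul, hpA, hqB]
    _ = √(p ^ 2) * √(q ^ 2) := by
        rw [sqrt_sq hp.le, sqrt_sq hq.le]
        field_simp
        ring

section LayerCake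

variable {ι : Type*} [Fintype ι] {w c : ι → ℝ} {φ : ℝ → ℝ} {T : ℝ}

lemma mul_sum_ite_eq_sum_indicator (t : ℝ) :
    φ t * ∑ i, (if t < c i then w i else 0) = ∑ i, w i * (Iio (c i)).indicator φ t := by
  rw [Finset.mul_sum]
  refine Finset.sum_congr rfl fun i _ => ?_
  by_cases h : t < c i <;> simp [h, mul_comm]

lemma MeasureTheory.IntegrableOn.mul_sum_ite (hφ : IntegrableOn φ (Ioc 0 T)) :
    IntegrableOn (fun t => φ t * ∑ i, (if t < c i then w i else 0)) (Ioc 0 T) := by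
  simp_rw [mul_sum_ite_eq_sum_indicator]
  exact integrable_finsetSum _ fun i _ => (hφ.indicator measurableSet_Iio).const_mul (w i)

theorem setIntegral_Ioc_mul_sum_ite (hφ : IntegrableOn φ (Ioc 0 T)) (hc₀ : ∀ i, 0 ≤ c i)
    (hcT : ∀ i, c i ≤ T) :
    ∫ t in Ioc 0 T, φ t * ∑ i, (if t < c i then w i else 0) = ∑ i, w i * ∫ t in 0..c i, φ t := by
  simp_rw [mul_sum_ite_eq_sum_indicator]
  rw [integral_finsetSum _ fun i _ => (hφ.indicator measurableSet_Iio).const_mul (w i)]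
  refine Finset.sum_congr rfl fun i _ => ?_
  have hIoo : Ioc 0 T ∩ Iio (c i) = Ioo 0 (c i) :=
    ext fun t => ⟨fun ⟨⟨h0, _⟩, hc⟩ => ⟨h0, hc⟩, fun ⟨h0, hc⟩ => ⟨⟨h0, hc.le.trans (hcT i)⟩, hc⟩⟩
  rw [integral_const_mul, setIntegral_indicator measurableSet_Iio, hIoo,
    ← integral_Ioc_eq_integral_Ioo, intervalIntegral.integral_of_le (hc₀ i)]

end LayerCake

lemma integral_id_add_const (c t₀ : ℝ) : ∫ t in 0..c, (t + t₀) = c ^ 2 / 2 + c * t₀ := by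
  simp [intervalIntegral.integral_add, integral_id]

lemma setIntegral_Ioc_inv_add {T t₀ : ℝ} (hT : 0 ≤ T) (ht₀ : 0 < t₀) :
    ∫ t in Ioc 0 T, (t + t₀)⁻¹ = log ((T + t₀) / t₀) := by
  rw [← intervalIntegral.integral_of_le hT,
    intervalIntegral.integral_comp_add_right (fun t => t⁻¹), zero_add,
    integral_inv_of_pos ht₀ (by linarith)]

lemma lorentz21_eq_setIntegral_Ioc_s4 {Ω : Type*} [Fintype Ω] (w : Ω → ℝ) {z : Ω → ℝ} {T : ℝ}
    (hzT : ∀ ω, |z ω| ≤ T) :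
    lorentz21 w z = ∫ t in Ioc 0 T, √(∑ ω, if t < |z ω| then w ω else 0) := by
  refine setIntegral_eq_of_subset_of_forall_sdiff_eq_zero measurableSet_Ioi Ioc_subset_Ioi_self
    fun t ⟨ht0, htT⟩ => ?_
  have hTt : T < t := lt_of_not_ge fun h => htT ⟨ht0, h⟩
  simp [fun ω => not_lt.2 ((hzT ω).trans hTt.le)]

theorem lorentz21_le_sqrt_mul_sqrt_log {Ω : Type*} [Fintype Ω] {w z : Ω → ℝ} {T t₀ : ℝ}
    (hw : ∀ ω, 0 ≤ w ω) (hT : 0 ≤ T) (hzT : ∀ ω, |z ω| ≤ T) (ht₀ : 0 < t₀) :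
    lorentz21 w z ≤ √(∑ ω, w ω * (|z ω| ^ 2 / 2 + |z ω| * t₀)) * √(log ((T + t₀) / t₀)) := by
  set F := fun t => ∑ ω, if t < |z ω| then w ω else 0
  have hF₀ : ∀ t, 0 ≤ F t := fun t => Finset.sum_nonneg fun ω _ => by split_ifs <;> simp [hw ω]
  have hpos : ∀ t ∈ Ioc 0 T, 0 < t + t₀ := fun t ht => by linarith [ht.1]
  have hcont : ContinuousOn (fun t => t + t₀) (Icc 0 T) := by fun_prop
  have hlin : IntegrableOn (fun t => t + t₀) (Ioc 0 T) :=
    hcont.integrableOn_Icc.mono_set Ioc_subset_Icc_self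
  have hinv : IntegrableOn (fun t => (t + t₀)⁻¹) (Ioc 0 T) :=
    ((hcont.inv₀ fun t ht => by linarith [ht.1]).integrableOn_Icc).mono_set Ioc_subset_Icc_self
  -- Cauchy–Schwarz against the weight `t + t₀`, whose inverse is integrable near `0`
  calc lorentz21 w z = ∫ t in Ioc 0 T, √((t + t₀) * F t * (t + t₀)⁻¹) := by
        rw [lorentz21_eq_setIntegral_Ioc_s4 w hzT]
        refine setIntegral_congr_fun measurableSet_Ioc fun t ht => ?_
        rw [mul_comm, inv_mul_cancel_left₀ (hpos t ht).ne']
    _ ≤ √(∫ t in Ioc 0 T, (t + t₀) * F t) * √(∫ t in Ioc 0 T, (t + t₀)⁻¹) :=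
        integral_sqrt_mul_le_sqrt_mul_sqrt
          ((ae_restrict_iff' measurableSet_Ioc).2 <| ae_of_all _ fun t ht =>
            mul_nonneg (hpos t ht).le (hF₀ t))
          ((ae_restrict_iff' measurableSet_Ioc).2 <| ae_of_all _ fun t ht =>
            inv_nonneg.2 (hpos t ht).le)
          hlin.mul_sum_ite hinv
    _ = _ := by
        rw [setIntegral_Ioc_mul_sum_ite hlin (fun ω => abs_nonneg _) hzT,
          setIntegral_Ioc_inv_add hT ht₀]
        simp_rw [integral_id_add_const]

section FiniteSums

variable {Ω : Type*} [Fintype Ω] {w : Ω → ℝ} (z : Ω → ℝ)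

lemma abs_le_sqrt_sum_sq_mul_div_sqrt {a : ℝ} (ha : 0 < a) (haw : ∀ ω, a ≤ w ω) (ω : Ω) :
    |z ω| ≤ √(∑ ω, z ω ^ 2 * w ω) / √a := by
  rw [le_div_iff₀ (sqrt_pos.2 ha), ← sqrt_sq_eq_abs, ← sqrt_mul (sq_nonneg _)]
  refine sqrt_le_sqrt ((mul_le_mul_of_nonneg_left (haw ω) (sq_nonneg _)).trans ?_)
  exact Finset.single_le_sum (f := fun ω => z ω ^ 2 * w ω)
    (fun ω _ => mul_nonneg (sq_nonneg _) (ha.le.trans (haw ω))) (Finset.mem_univ ω)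

lemma sum_mul_abs_le_sqrt_mul_sqrt (hw : ∀ ω, 0 ≤ w ω) :
    ∑ ω, w ω * |z ω| ≤ √(∑ ω, w ω) * √(∑ ω, z ω ^ 2 * w ω) := by
  refine le_of_eq_of_le (Finset.sum_congr rfl fun ω _ => ?_)
    (sum_sqrt_mul_sqrt_le _ hw fun ω => mul_nonneg (sq_nonneg (z ω)) (hw ω))
  rw [sqrt_mul (sq_nonneg _), sqrt_sq_eq_abs, mul_left_comm, mul_self_sqrt (hw ω), mul_comm]

lemma sum_mul_half_sq_add_mul_le (hw : ∀ ω, 0 ≤ w ω) :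
    ∑ ω, w ω * (|z ω| ^ 2 / 2 + |z ω| * (√(∑ ω, z ω ^ 2 * w ω) / √(∑ ω, w ω))) ≤
      3 / 2 * ∑ ω, z ω ^ 2 * w ω := by
  set S := √(∑ ω, z ω ^ 2 * w ω)
  set R := √(∑ ω, w ω)
  have hS : S ^ 2 = ∑ ω, z ω ^ 2 * w ω :=
    sq_sqrt (Finset.sum_nonneg fun ω _ => mul_nonneg (sq_nonneg _) (hw ω))
  have hsplit : ∑ ω, w ω * (|z ω| ^ 2 / 2 + |z ω| * (S / R)) =
      (∑ ω, z ω ^ 2 * w ω) / 2 + S / R * ∑ ω, w ω * |z ω| := by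
    rw [Finset.sum_div, Finset.mul_sum, ← Finset.sum_add_distrib]
    refine Finset.sum_congr rfl fun ω _ => ?_
    rw [sq_abs]; ring
  have hcross : S / R * ∑ ω, w ω * |z ω| ≤ S ^ 2 := by
    have hR₀ : 0 ≤ R := sqrt_nonneg _
    rcases hR₀.eq_or_lt with hR | hR
    · rw [← hR, div_zero, zero_mul]; positivity
    calc S / R * ∑ ω, w ω * |z ω| ≤ S / R * (R * S) := by
          gcongr
          exact sum_mul_abs_le_sqrt_mul_sqrt z hw
      _ = S ^ 2 := by field_simp
  rw [hsplit, ← hS]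
  linarith

end FiniteSums

lemma sqrt_log_one_add_sqrt_le {x : ℝ} (hx : 1 ≤ x) :
    √(log (1 + √x)) ≤ 1 + √(logb 2 x) := by
  have hsx : 1 ≤ √x := one_le_sqrt.2 hx
  have hy : 0 ≤ logb 2 x := logb_nonneg one_lt_two hx
  have hlog2 : 0 < log 2 ∧ log 2 ≤ 1 := ⟨log_pos one_lt_two, by linarith [log_two_lt_d9]⟩
  have hlog : log (1 + √x) ≤ 1 + logb 2 x :=
    calc log (1 + √x) ≤ log (2 * √x) := log_le_log (by linarith) (by linarith)
      _ = log 2 + log 2 * logb 2 x / 2 := by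
        rw [log_mul two_ne_zero (by linarith), log_sqrt (by linarith), log_div_log.symm]
        field_simp
      _ ≤ 1 + logb 2 x := by nlinarith
  rw [sqrt_le_left (by positivity)]
  nlinarith [sq_sqrt hy, sqrt_nonneg (logb 2 x)]

theorem stmt4 :
    ∃ c₃ : ℝ, 0 < c₃ ∧
      ∀ (Ω : Type) [Fintype Ω] (w : Ω → ℝ) (a : ℝ), 0 < a → (∀ ω, a ≤ w ω) →
        ∀ z : Ω → ℝ,
          lorentz21 w z ≤
            c₃ * (1 + Real.sqrt (Real.logb 2 ((∑ ω, w ω) / a))) *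
              Real.sqrt (∑ ω, (z ω) ^ 2 * w ω) := by
  refine ⟨2, two_pos, fun Ω _ w a ha haw z => ?_⟩
  have hw : ∀ ω, 0 ≤ w ω := fun ω => ha.le.trans (haw ω)
  have hzT := abs_le_sqrt_sum_sq_mul_div_sqrt z ha haw
  have hA := sum_mul_half_sq_add_mul_le z hw
  set M := ∑ ω, w ω
  set S2 := ∑ ω, z ω ^ 2 * w ω
  have hS2 : 0 ≤ S2 := Finset.sum_nonneg fun ω _ => mul_nonneg (sq_nonneg _) (hw ω)
  rcases hS2.eq_or_lt with hS | hS
  · rw [lorentz21_eq_setIntegral_Ioc_s4 w hzT, ← hS, sqrt_zero, zero_div, Ioc_self,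
      setIntegral_empty]
    positivity
  obtain ⟨ω₀, -, -⟩ := Finset.exists_ne_zero_of_sum_ne_zero hS.ne'
  have haM : a ≤ M := (haw ω₀).trans (Finset.single_le_sum (fun ω _ => hw ω) (Finset.mem_univ ω₀))
  have hM : 0 < M := ha.trans_le haM
  have hratio : (√S2 / √a + √S2 / √M) / (√S2 / √M) = 1 + √(M / a) := by
    rw [sqrt_div hM.le]
    field_simp
    ring
  calc lorentz21 w z
      ≤ √(∑ ω, w ω * (|z ω| ^ 2 / 2 + |z ω| * (√S2 / √M))) *
          √(log ((√S2 / √a + √S2 / √M) / (√S2 / √M))) :=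
        lorentz21_le_sqrt_mul_sqrt_log hw (by positivity) hzT (by positivity)
    _ ≤ √(2 ^ 2 * S2) * √(log (1 + √(M / a))) := by
        rw [hratio]
        gcongr
        linarith
    _ ≤ 2 * (1 + √(logb 2 (M / a))) * √S2 := by
        rw [sqrt_mul (by positivity), sqrt_sq two_pos.le, mul_right_comm]
        gcongr
        exact sqrt_log_one_add_sqrt_le ((one_le_div ha).2 haM)
end

section
/- Let μ be a probability measure on a finite set Ω. Then for all functions y_1,…,y_S : Ω → ℝ, (∑_{s=1}^S ‖y_s‖_{2,1}²)^{1/2} ≤ max_{ω∈Ω} ∑_{s=1}^S |y_s(ω)|. -/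
open scoped BigOperators

/-!
If `F` is the distribution function of `f` and `M ≥ |f|`, then `F` vanishes on `[M, ∞)`, so
Cauchy–Schwarz on `(0, M)` gives `‖f‖_{2,1}² = (∫₀^M √F)² ≤ M ∫₀^∞ F = M ‖f‖₁`. Taking
`M = max_ω ∑_s |y_s(ω)|` and summing over `s`,
`∑_s ‖y_s‖_{2,1}² ≤ M ∑_ω μ(ω) ∑_s |y_s(ω)| ≤ M²`.
-/

open MeasureTheory Set

theorem sq_integral_sqrt_le_measureReal_mul_integral {α : Type*} [MeasurableSpace α]
    {μ : Measure α} {F : α → ℝ} {s : Set α} (hs : MeasurableSet s) (hμs : μ s ≠ ⊤)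
    (hF0 : ∀ a, 0 ≤ F a) (hFs : ∀ a ∉ s, F a = 0) (hF : Integrable F μ) :
    (∫ a, √(F a) ∂μ) ^ 2 ≤ μ.real s * ∫ a, F a ∂μ := by
  set Λ := ∫ a, √(F a) ∂μ
  have hΛ : 0 ≤ Λ := integral_nonneg fun a => Real.sqrt_nonneg _
  have hind : Integrable (s.indicator fun _ => (1 : ℝ)) μ :=
    (integrable_indicator_iff hs).2 (integrableOn_const hμs)
  -- AM–GM `2|x|√F ≤ F + x²` on `s`, integrated: the quadratic `μ(s) x² - 2Λx + ∫ F` is nonnegative.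
  have hquad : ∀ x : ℝ, 2 * |x| * Λ ≤ ∫ a, F a ∂μ + x ^ 2 * μ.real s := by
    intro x
    have hamgm : ∀ a, 2 * |x| * √(F a) ≤ F a + x ^ 2 * s.indicator (fun _ => 1) a := by
      intro a
      by_cases ha : a ∈ s
      · rw [indicator_of_mem ha, mul_one]
        nlinarith [sq_nonneg (√(F a) - |x|), Real.sq_sqrt (hF0 a), sq_abs x]
      · simp [hFs a ha, indicator_of_notMem ha]
    calc 2 * |x| * Λ = ∫ a, 2 * |x| * √(F a) ∂μ := (integral_const_mul _ _).symm
    _ ≤ ∫ a, F a + x ^ 2 * s.indicator (fun _ => 1) a ∂μ :=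
        integral_mono_of_nonneg (ae_of_all _ fun a => by positivity)
          (hF.add (hind.const_mul _)) (ae_of_all _ hamgm)
    _ = ∫ a, F a ∂μ + x ^ 2 * μ.real s := by
        rw [integral_add hF (hind.const_mul _), integral_const_mul,
          integral_indicator_const _ hs, smul_eq_mul, mul_one]
  have hdiscrim := discrim_le_zero (a := μ.real s) (b := -2 * Λ) (c := ∫ a, F a ∂μ) fun x => by
    nlinarith [hquad x, mul_le_mul_of_nonneg_right (le_abs_self x) hΛ]
  rw [discrim] at hdiscrim
  linarith

lemma measureReal_restrict_Ioi_Iio {c : ℝ} (hc : 0 ≤ c) :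
    (volume.restrict (Ioi 0)).real (Iio c) = c := by
  rw [measureReal_restrict_apply measurableSet_Iio, Iio_inter_Ioi, Real.volume_real_Ioo, sub_zero,
    max_eq_left hc]

lemma volume_restrict_Ioi_Iio_ne_top (c : ℝ) : volume.restrict (Ioi 0) (Iio c) ≠ ⊤ := by
  rw [Measure.restrict_apply measurableSet_Iio, Iio_inter_Ioi]
  exact measure_Ioo_lt_top.ne

lemma ite_lt_eq_indicator (c k t : ℝ) :
    (if t < c then k else 0) = (Iio c).indicator (fun _ => k) t := rfl

lemma integrableOn_Ioi_ite_lt (c k : ℝ) :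
    IntegrableOn (fun t : ℝ => if t < c then k else 0) (Ioi 0) :=
  (integrable_indicator_iff measurableSet_Iio).2
    (integrableOn_const (volume_restrict_Ioi_Iio_ne_top c))

lemma integral_Ioi_ite_lt {c : ℝ} (hc : 0 ≤ c) (k : ℝ) :
    ∫ t in Ioi 0, (if t < c then k else 0) = c * k := by
  simp_rw [ite_lt_eq_indicator]
  rw [integral_indicator_const _ measurableSet_Iio, measureReal_restrict_Ioi_Iio hc, smul_eq_mul]

noncomputable def distributionFun {Ω : Type*} [Fintype Ω] (w f : Ω → ℝ) (t : ℝ) : ℝ :=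
  ∑ ω, if t < |f ω| then w ω else 0

section Distribution

variable {Ω : Type*} [Fintype Ω] (w f : Ω → ℝ)

lemma lorentz21_eq_integral_sqrt_distributionFun :
    lorentz21 w f = ∫ t in Ioi 0, √(distributionFun w f t) := rfl

lemma integrableOn_distributionFun : IntegrableOn (distributionFun w f) (Ioi 0) :=
  integrable_finsetSum _ fun _ _ => integrableOn_Ioi_ite_lt _ _

lemma integral_distributionFun :
    ∫ t in Ioi 0, distributionFun w f t = ∑ ω, |f ω| * w ω := by
  unfold distributionFun
  rw [integral_finsetSum _ fun _ _ => integrableOn_Ioi_ite_lt _ _]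
  exact Finset.sum_congr rfl fun ω _ => integral_Ioi_ite_lt (abs_nonneg _) _

variable {w} in
lemma distributionFun_nonneg (hw : ∀ ω, 0 ≤ w ω) (t : ℝ) : 0 ≤ distributionFun w f t :=
  Finset.sum_nonneg fun ω _ => by split_ifs <;> simp [hw ω]

variable {f} in
lemma distributionFun_eq_zero {M t : ℝ} (hM : ∀ ω, |f ω| ≤ M) (ht : M ≤ t) :
    distributionFun w f t = 0 :=
  Finset.sum_eq_zero fun ω _ => if_neg (not_lt.2 ((hM ω).trans ht))

end Distribution

theorem sq_lorentz21_le {Ω : Type*} [Fintype Ω] {w f : Ω → ℝ} (hw : ∀ ω, 0 ≤ w ω) {M : ℝ}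
    (hM0 : 0 ≤ M) (hM : ∀ ω, |f ω| ≤ M) :
    lorentz21 w f ^ 2 ≤ M * ∑ ω, |f ω| * w ω := by
  rw [lorentz21_eq_integral_sqrt_distributionFun, ← integral_distributionFun,
    ← measureReal_restrict_Ioi_Iio hM0]
  exact sq_integral_sqrt_le_measureReal_mul_integral measurableSet_Iio
    (volume_restrict_Ioi_Iio_ne_top M) (distributionFun_nonneg f hw)
    (fun t ht => distributionFun_eq_zero w hM (not_lt.1 ht)) (integrableOn_distributionFun w f)

theorem stmt6 (Ω : Type) [Fintype Ω] (w : Ω → ℝ) (hw : ∀ ω, 0 ≤ w ω)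
    (hw1 : (∑ ω, w ω) = 1) (S : ℕ) (y : Fin S → Ω → ℝ) :
    Real.sqrt (∑ s, (lorentz21 w (y s)) ^ 2) ≤ ‖(fun ω => ∑ s, |y s ω|)‖ := by
  set M := ‖(fun ω => ∑ s, |y s ω|)‖
  have hM0 : 0 ≤ M := norm_nonneg _
  have hsum_le : ∀ ω, ∑ s, |y s ω| ≤ M := fun ω =>
    (le_abs_self _).trans (norm_le_pi_norm (fun ω => ∑ s, |y s ω|) ω)
  have hy_le : ∀ s ω, |y s ω| ≤ M := fun s ω =>
    (Finset.single_le_sum (fun s _ => abs_nonneg (y s ω)) (Finset.mem_univ s)).trans (hsum_le ω)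
  rw [Real.sqrt_le_left hM0]
  calc ∑ s, lorentz21 w (y s) ^ 2 ≤ ∑ s, M * ∑ ω, |y s ω| * w ω :=
        Finset.sum_le_sum fun s _ => sq_lorentz21_le hw hM0 (hy_le s)
  _ = M * ∑ ω, (∑ s, |y s ω|) * w ω := by
        simp_rw [← Finset.mul_sum, Finset.sum_mul]
        rw [Finset.sum_comm]
  _ ≤ M * ∑ ω, M * w ω := by
        gcongr with ω
        exacts [hw ω, hsum_le ω]
  _ = M ^ 2 := by rw [← Finset.mul_sum, hw1]; ring
end

section
/- There exists a universal constant c₄ > 0 with the following property. Let N ≥ 2 be an integer and let μ be a probability measure on a finite set Ω with at most N points. Then for all functions z_1,…,z_S : Ω → ℝ, (∑_{s=1}^S ‖z_s‖_{2,1}²)^{1/2} ≤ c₄ · √(log N) · max_{ω∈Ω} (∑_{s=1}^S |z_s(ω)|²)^{1/2}. -/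
/-! For a single function `f`, cut `(0, ‖f‖∞]` into `(0, ‖f‖∞ 2⁻ᴷ]` and the `K` dyadic intervals
`(‖f‖∞ 2⁻ⁱ⁻¹, ‖f‖∞ 2⁻ⁱ]`, and bound the antitone integrand `√μ(|f| > t)` on each piece by its value
at the left end. By Cauchy–Schwarz over the dyadic pieces and a discrete layer-cake estimate,
`‖f‖²₂,₁ ≤ 2 μ(Ω) ‖f‖∞² / 4ᴷ + 3 K ‖f‖²_{L²(μ)}`.
Summing over `s`, `∑ₛ ‖zₛ‖²_{L²(μ)} ≤ max_ω ∑ₛ zₛ(ω)²` and `∑ₛ ‖zₛ‖∞² ≤ N max_ω ∑ₛ zₛ(ω)²`,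
so `K = ⌊log₂ N⌋`, for which `N ≤ 4ᴷ`, gives the bound. -/

open scoped BigOperators

open Finset MeasureTheory

theorem sum_ite_lt_sub_le {u : ℕ → ℝ} (hu : Antitone u) (hu0 : ∀ i, 0 ≤ u i) {y : ℝ}
    (hy : 0 ≤ y) (n : ℕ) : ∑ i ∈ range n, (if u i < y then u i - u (i + 1) else 0) ≤ y := by
  induction n generalizing u with
  | zero => simpa using hy
  | succ n ih =>
    rw [sum_range_succ']
    by_cases h0 : u 0 < y
    · have hall : ∀ i ∈ range n, (if u (i + 1) < y then u (i + 1) - u (i + 1 + 1) else 0)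
          = u (i + 1) - u (i + 1 + 1) :=
        fun i _ => if_pos ((hu (Nat.zero_le _)).trans_lt h0)
      rw [sum_congr rfl hall, sum_range_sub', if_pos h0]
      linarith [hu0 (n + 1)]
    · rw [if_neg h0, add_zero]
      exact ih (hu.comp_monotone (fun _ _ h => Nat.succ_le_succ h)) (fun i => hu0 _)

theorem sum_ite_lt_dyadic_sq_le {c : ℝ} (hc : 0 ≤ c) (x : ℝ) (n : ℕ) :
    ∑ i ∈ range n, (if c / 2 ^ (i + 1) < |x| then (c / 2 ^ (i + 1)) ^ 2 else 0)
      ≤ 4 / 3 * x ^ 2 := by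
  set u : ℕ → ℝ := fun i => (c / 2 ^ (i + 1)) ^ 2
  have hu : Antitone u := fun i j hij => by
    dsimp only [u]; gcongr; norm_num
  -- consecutive terms shrink by the factor 4, so each term is 4/3 of a telescoping difference
  have hterm : ∀ i ∈ range n, (if c / 2 ^ (i + 1) < |x| then u i else 0)
      = 4 / 3 * (if u i < x ^ 2 then u i - u (i + 1) else 0) := fun i _ => by
    have hiff : u i < x ^ 2 ↔ c / 2 ^ (i + 1) < |x| := by
      rw [← sq_abs x]; exact sq_lt_sq₀ (by positivity) (abs_nonneg x)
    simp only [hiff]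
    split_ifs
    · simp only [u, pow_succ]; field_simp; ring
    · simp
  calc _ = ∑ i ∈ range n, (if c / 2 ^ (i + 1) < |x| then u i else 0) := rfl
    _ = 4 / 3 * ∑ i ∈ range n, (if u i < x ^ 2 then u i - u (i + 1) else 0) := by
      rw [sum_congr rfl hterm, mul_sum]
    _ ≤ 4 / 3 * x ^ 2 := by
      gcongr
      exact sum_ite_lt_sub_le hu (fun i => sq_nonneg _) (sq_nonneg x) n

theorem Antitone.intervalIntegral_le_mul {φ : ℝ → ℝ} (hφ : Antitone φ) {a b : ℝ} (hab : a ≤ b) :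
    ∫ t in a..b, φ t ≤ φ a * (b - a) := by
  calc ∫ t in a..b, φ t ≤ ∫ _ in a..b, φ a :=
        intervalIntegral.integral_mono_on hab hφ.intervalIntegrable intervalIntegrable_const
          fun t ht => hφ ht.1
    _ = φ a * (b - a) := by rw [intervalIntegral.integral_const, smul_eq_mul, mul_comm]

theorem Antitone.intervalIntegral_le_sum {φ : ℝ → ℝ} (hφ : Antitone φ) {p : ℕ → ℝ}
    (hp : Antitone p) (n : ℕ) :
    ∫ t in p n..p 0, φ t ≤ ∑ i ∈ range n, φ (p (i + 1)) * (p i - p (i + 1)) := by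
  induction n with
  | zero => simp
  | succ n ih =>
    rw [← intervalIntegral.integral_add_adjacent_intervals hφ.intervalIntegrable
      hφ.intervalIntegrable, sum_range_succ, add_comm]
    exact add_le_add ih (hφ.intervalIntegral_le_mul (hp n.le_succ))

namespace Lorentz21

variable {Ω : Type*} [Fintype Ω] {w : Ω → ℝ} (f : Ω → ℝ)

noncomputable def distribution (w f : Ω → ℝ) (t : ℝ) : ℝ :=
  ∑ ω, if t < |f ω| then w ω else 0

theorem antitone_distribution (hw : ∀ ω, 0 ≤ w ω) : Antitone (distribution w f) :=
  fun _ _ hst => sum_le_sum fun ω _ => by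
    split_ifs with h₁ h₂
    exacts [le_rfl, absurd (hst.trans_lt h₁) h₂, hw ω, le_rfl]

theorem distribution_nonneg (hw : ∀ ω, 0 ≤ w ω) (t : ℝ) : 0 ≤ distribution w f t :=
  sum_nonneg fun ω _ => by split_ifs; exacts [hw ω, le_rfl]

theorem distribution_le_sum (hw : ∀ ω, 0 ≤ w ω) (t : ℝ) : distribution w f t ≤ ∑ ω, w ω :=
  sum_le_sum fun ω _ => by split_ifs; exacts [le_rfl, hw ω]

theorem distribution_eq_zero {t : ℝ} (ht : ‖f‖ ≤ t) : distribution w f t = 0 :=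
  sum_eq_zero fun ω _ => if_neg ((norm_le_pi_norm f ω).trans ht).not_gt

theorem sum_distribution_dyadic_mul_sq_le (hw : ∀ ω, 0 ≤ w ω) {c : ℝ} (hc : 0 ≤ c) (n : ℕ) :
    ∑ i ∈ range n, distribution w f (c / 2 ^ (i + 1)) * (c / 2 ^ (i + 1)) ^ 2
      ≤ 4 / 3 * ∑ ω, w ω * f ω ^ 2 := by
  calc ∑ i ∈ range n, distribution w f (c / 2 ^ (i + 1)) * (c / 2 ^ (i + 1)) ^ 2
      = ∑ ω, w ω * ∑ i ∈ range n,
          (if c / 2 ^ (i + 1) < |f ω| then (c / 2 ^ (i + 1)) ^ 2 else 0) := by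
        simp only [distribution, sum_mul, mul_sum, mul_ite, ite_mul, mul_zero, zero_mul]
        rw [sum_comm]
    _ ≤ ∑ ω, w ω * (4 / 3 * f ω ^ 2) :=
        sum_le_sum fun ω _ => mul_le_mul_of_nonneg_left (sum_ite_lt_dyadic_sq_le hc _ n) (hw ω)
    _ = 4 / 3 * ∑ ω, w ω * f ω ^ 2 := by rw [mul_sum]; simp only [mul_left_comm]

theorem lorentz21_nonneg : 0 ≤ lorentz21 w f :=
  setIntegral_nonneg measurableSet_Ioi fun _ _ => Real.sqrt_nonneg _

theorem lorentz21_eq_intervalIntegral :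
    lorentz21 w f = ∫ t in (0)..‖f‖, Real.sqrt (distribution w f t) := by
  rw [intervalIntegral.integral_of_le (norm_nonneg f)]
  refine setIntegral_eq_of_subset_of_forall_sdiff_eq_zero measurableSet_Ioi
    Set.Ioc_subset_Ioi_self fun t ht => ?_
  change Real.sqrt (distribution w f t) = 0
  rw [distribution_eq_zero f (le_of_not_ge fun h => ht.2 ⟨ht.1, h⟩), Real.sqrt_zero]

theorem lorentz21_le (hw : ∀ ω, 0 ≤ w ω) (K : ℕ) :
    lorentz21 w f ≤ Real.sqrt (∑ ω, w ω) * (‖f‖ / 2 ^ K) +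
      ∑ i ∈ range K, Real.sqrt (distribution w f (‖f‖ / 2 ^ (i + 1))) * (‖f‖ / 2 ^ (i + 1)) := by
  set φ : ℝ → ℝ := fun t => Real.sqrt (distribution w f t)
  set p : ℕ → ℝ := fun i => ‖f‖ / 2 ^ i
  have hφ : Antitone φ := fun _ _ h => Real.sqrt_le_sqrt (antitone_distribution f hw h)
  have hp : Antitone p := fun i j hij => by
    dsimp only [p]; gcongr; norm_num
  have hhead : ∫ t in (0)..p K, φ t ≤ Real.sqrt (∑ ω, w ω) * (‖f‖ / 2 ^ K) := by
    refine (hφ.intervalIntegral_le_mul (by positivity)).trans ?_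
    rw [sub_zero]
    gcongr
    exact Real.sqrt_le_sqrt (distribution_le_sum f hw 0)
  have htail := hφ.intervalIntegral_le_sum hp K
  have hp_succ : ∀ i, p i - p (i + 1) = p (i + 1) := fun i => by
    simp only [p, pow_succ]; field_simp; ring
  simp only [hp_succ] at htail
  calc lorentz21 w f = (∫ t in (0)..p K, φ t) + ∫ t in p K..p 0, φ t := by
        rw [intervalIntegral.integral_add_adjacent_intervals (hφ.intervalIntegrable (μ := volume))
          hφ.intervalIntegrable, lorentz21_eq_intervalIntegral]
        simp only [p, pow_zero, div_one, φ]
    _ ≤ _ := add_le_add hhead htail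

theorem lorentz21_sq_le (hw : ∀ ω, 0 ≤ w ω) (K : ℕ) :
    lorentz21 w f ^ 2 ≤ 2 * (∑ ω, w ω) * ‖f‖ ^ 2 / 4 ^ K + 3 * K * ∑ ω, w ω * f ω ^ 2 := by
  set q : ℕ → ℝ := fun i => ‖f‖ / 2 ^ (i + 1)
  set A := Real.sqrt (∑ ω, w ω) * (‖f‖ / 2 ^ K)
  set B := ∑ i ∈ range K, Real.sqrt (distribution w f (q i)) * q i
  have hA : A ^ 2 = (∑ ω, w ω) * ‖f‖ ^ 2 / 4 ^ K := by
    rw [mul_pow, Real.sq_sqrt (sum_nonneg fun ω _ => hw ω), div_pow, ← pow_mul, mul_comm K,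
      pow_mul]
    norm_num [mul_div_assoc]
  have hB : B ^ 2 ≤ K * (4 / 3 * ∑ ω, w ω * f ω ^ 2) := by
    refine (sq_sum_le_card_mul_sum_sq (s := range K)).trans ?_
    rw [card_range]
    gcongr
    refine le_of_eq_of_le (sum_congr rfl fun i _ => ?_)
      (sum_distribution_dyadic_mul_sq_le f hw (norm_nonneg f) K)
    rw [mul_pow, Real.sq_sqrt (distribution_nonneg f hw _)]
  calc lorentz21 w f ^ 2 ≤ (A + B) ^ 2 :=
        pow_le_pow_left₀ (lorentz21_nonneg f) (lorentz21_le f hw K) 2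
    _ ≤ 2 * (A ^ 2 + B ^ 2) := add_sq_le
    _ ≤ 2 * ((∑ ω, w ω) * ‖f‖ ^ 2 / 4 ^ K + K * (4 / 3 * ∑ ω, w ω * f ω ^ 2)) := by
        rw [hA]; gcongr
    _ = 2 * (∑ ω, w ω) * ‖f‖ ^ 2 / 4 ^ K + 8 / 3 * K * ∑ ω, w ω * f ω ^ 2 := by ring
    _ ≤ _ := by
        gcongr
        · exact sum_nonneg fun ω _ => mul_nonneg (hw ω) (sq_nonneg _)
        · norm_num

end Lorentz21

section VectorValued

variable {ι Ω : Type*} [Fintype ι] [Fintype Ω]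

theorem norm_sq_le_sum_sq (f : Ω → ℝ) : ‖f‖ ^ 2 ≤ ∑ ω, f ω ^ 2 := by
  have hf : ‖f‖ ≤ Real.sqrt (∑ ω, f ω ^ 2) :=
    (pi_norm_le_iff_of_nonneg (Real.sqrt_nonneg _)).2 fun ω => by
      rw [Real.norm_eq_abs]
      exact Real.abs_le_sqrt <| single_le_sum (fun ω _ => sq_nonneg (f ω)) (mem_univ ω)
  simpa [Real.sq_sqrt (sum_nonneg fun ω _ => sq_nonneg (f ω))] using
    pow_le_pow_left₀ (norm_nonneg f) hf 2

theorem sum_sq_le_norm_sq (z : ι → Ω → ℝ) (ω : Ω) :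
    ∑ s, z s ω ^ 2 ≤ ‖fun ω => Real.sqrt (∑ s, z s ω ^ 2)‖ ^ 2 := by
  have h := pow_le_pow_left₀ (norm_nonneg _)
    (norm_le_pi_norm (fun ω => Real.sqrt (∑ s, z s ω ^ 2)) ω) 2
  rwa [Real.norm_eq_abs, sq_abs, Real.sq_sqrt (sum_nonneg fun s _ => sq_nonneg _)] at h

theorem sum_norm_sq_le (z : ι → Ω → ℝ) :
    ∑ s, ‖z s‖ ^ 2 ≤ Fintype.card Ω * ‖fun ω => Real.sqrt (∑ s, z s ω ^ 2)‖ ^ 2 :=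
  calc ∑ s, ‖z s‖ ^ 2 ≤ ∑ s, ∑ ω, z s ω ^ 2 := sum_le_sum fun s _ => norm_sq_le_sum_sq (z s)
    _ = ∑ ω, ∑ s, z s ω ^ 2 := sum_comm
    _ ≤ ∑ _ω : Ω, ‖fun ω => Real.sqrt (∑ s, z s ω ^ 2)‖ ^ 2 :=
        sum_le_sum fun ω _ => sum_sq_le_norm_sq z ω
    _ = _ := by rw [sum_const, card_univ, nsmul_eq_mul]

theorem sum_weighted_sq_le {w : Ω → ℝ} (hw : ∀ ω, 0 ≤ w ω) (z : ι → Ω → ℝ) :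
    ∑ s, ∑ ω, w ω * z s ω ^ 2 ≤ (∑ ω, w ω) * ‖fun ω => Real.sqrt (∑ s, z s ω ^ 2)‖ ^ 2 :=
  calc ∑ s, ∑ ω, w ω * z s ω ^ 2 = ∑ ω, w ω * ∑ s, z s ω ^ 2 := by
        rw [sum_comm]; simp only [mul_sum]
    _ ≤ ∑ ω, w ω * ‖fun ω => Real.sqrt (∑ s, z s ω ^ 2)‖ ^ 2 :=
        sum_le_sum fun ω _ => mul_le_mul_of_nonneg_left (sum_sq_le_norm_sq z ω) (hw ω)
    _ = _ := by rw [sum_mul]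

theorem sum_lorentz21_sq_le {w : Ω → ℝ} (hw : ∀ ω, 0 ≤ w ω) (z : ι → Ω → ℝ) (K : ℕ) :
    ∑ s, lorentz21 w (z s) ^ 2 ≤ (2 * Fintype.card Ω / 4 ^ K + 3 * K) * (∑ ω, w ω) *
      ‖fun ω => Real.sqrt (∑ s, z s ω ^ 2)‖ ^ 2 := by
  set M := ‖fun ω => Real.sqrt (∑ s, z s ω ^ 2)‖
  have hW : 0 ≤ ∑ ω, w ω := sum_nonneg fun ω _ => hw ω
  calc ∑ s, lorentz21 w (z s) ^ 2
      ≤ ∑ s, (2 * (∑ ω, w ω) * ‖z s‖ ^ 2 / 4 ^ K + 3 * K * ∑ ω, w ω * z s ω ^ 2) :=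
        sum_le_sum fun s _ => Lorentz21.lorentz21_sq_le (z s) hw K
    _ = 2 * (∑ ω, w ω) / 4 ^ K * ∑ s, ‖z s‖ ^ 2 + 3 * K * ∑ s, ∑ ω, w ω * z s ω ^ 2 := by
        rw [sum_add_distrib, ← mul_sum, ← sum_div, ← mul_sum]
        ring
    _ ≤ 2 * (∑ ω, w ω) / 4 ^ K * (Fintype.card Ω * M ^ 2) + 3 * K * ((∑ ω, w ω) * M ^ 2) := by
        gcongr
        exacts [sum_norm_sq_le z, sum_weighted_sq_le hw z]
    _ = _ := by ring

end VectorValued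

theorem le_four_pow_log_two {N : ℕ} (hN : 2 ≤ N) : N ≤ 4 ^ Nat.log 2 N :=
  calc N ≤ 2 ^ (Nat.log 2 N + 1) := (Nat.lt_pow_succ_log_self one_lt_two N).le
    _ ≤ 2 ^ (2 * Nat.log 2 N) :=
        Nat.pow_le_pow_right two_pos (by have := Nat.log_pos one_lt_two hN; omega)
    _ = 4 ^ Nat.log 2 N := by rw [pow_mul]; norm_num

theorem stmt7 :
    ∃ c₄ : ℝ, 0 < c₄ ∧
      ∀ (N : ℕ), 2 ≤ N →
        ∀ (Ω : Type) [Fintype Ω], Fintype.card Ω ≤ N →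
          ∀ (w : Ω → ℝ), (∀ ω, 0 ≤ w ω) → (∑ ω, w ω) = 1 →
            ∀ (S : ℕ) (z : Fin S → Ω → ℝ),
              Real.sqrt (∑ s, (lorentz21 w (z s)) ^ 2) ≤
                c₄ * Real.sqrt (Real.logb 2 N) *
                  ‖(fun ω => Real.sqrt (∑ s, (z s ω) ^ 2))‖ := by
  refine ⟨3, by norm_num, fun N hN Ω _ hcard w hw hw1 S z => ?_⟩
  set K := Nat.log 2 N
  have hK : (1 : ℝ) ≤ K := by exact_mod_cast Nat.log_pos one_lt_two hN
  have hKlog : (K : ℝ) ≤ Real.logb 2 N := by exact_mod_cast Real.natLog_le_logb N 2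
  have hcard : (2 * Fintype.card Ω / 4 ^ K : ℝ) ≤ 2 := by
    rw [div_le_iff₀ (by positivity)]
    have : (Fintype.card Ω : ℝ) ≤ 4 ^ K := by exact_mod_cast hcard.trans (le_four_pow_log_two hN)
    linarith
  have hbound := sum_lorentz21_sq_le hw z K
  rw [hw1, mul_one] at hbound
  rw [Real.sqrt_le_left (by positivity), mul_pow, mul_pow, Real.sq_sqrt (by linarith)]
  refine hbound.trans (mul_le_mul_of_nonneg_right ?_ (sq_nonneg _))
  linarith
end

section
/- There exists a universal constant c > 0 with the following property. For every integer N ≥ 2 there exist a real Banach space Y and a nonzero bounded linear operator T : l_∞^N → Y such that π_2(T) ≥ c^{-1} · √(log N) · π_{2,1}(T), where π_2(T) is the least constant C for which T is 2-summing with constant C and π_{2,1}(T) is the least constant C for which T is (2,1)-summing with constant C. -/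
open scoped BigOperators

/-- `T` is (2,1)-summing with constant `C`. -/
def Summing21 {X Y : Type*} [NormedAddCommGroup X] [NormedSpace ℝ X]
    [NormedAddCommGroup Y] [NormedSpace ℝ Y] (T : X →L[ℝ] Y) (C : ℝ) : Prop :=
  ∀ (S : ℕ) (x : Fin S → X),
    Real.sqrt (∑ s, ‖T (x s)‖ ^ 2) ≤
      C * sSup {r : ℝ | ∃ f : X →L[ℝ] ℝ, ‖f‖ ≤ 1 ∧ r = ∑ s, |f (x s)|}

/-- `T` is 2-summing with constant `C`. -/
def Summing2 {X Y : Type*} [NormedAddCommGroup X] [NormedSpace ℝ X]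
    [NormedAddCommGroup Y] [NormedSpace ℝ Y] (T : X →L[ℝ] Y) (C : ℝ) : Prop :=
  ∀ (S : ℕ) (x : Fin S → X),
    Real.sqrt (∑ s, ‖T (x s)‖ ^ 2) ≤
      C * sSup {r : ℝ | ∃ f : X →L[ℝ] ℝ, ‖f‖ ≤ 1 ∧
        r = Real.sqrt (∑ s, |f (x s)| ^ 2)}


/-!
Take for `Y` the space `ℝ^N` with the Lorentz `ℓ_{2,1}` norm
`‖x‖ = max_π ∑ₖ (√(k+1) - √k) |x (π k)|` and for `T` the formal identity on `l_∞^N`.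

Splitting the weighted sum at the index `K ≈ ‖x‖₁ / ‖x‖_∞` gives `‖x‖_{2,1}² ≤ 4 ‖x‖_∞ ‖x‖₁`.
The weak `ℓ₁` norm of a family in `l_∞^N` dominates every `‖x_s‖_∞` and every column sum
`∑_s |x_s k|`, so summing over `s` yields `π_{2,1}(T) ≤ 2 √N`.

For the `N` cyclic shifts of `(1/√(k+1))_k`, every column has square sum `H_N`, and a functional of
norm at most one is an `ℓ₁`-combination of coordinates, so the weak `ℓ₂` norm is at most `√H_N`;
each shift has `ℓ_{2,1}` norm at least `H_N / 2`. Hence `π_2(T) ≥ √(N H_N) / 2`, and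
`H_N ≥ log N ≥ (log₂ N) / 2` finishes the proof.
-/

open Finset

noncomputable section

section WeakNorms

variable {X : Type*} [NormedAddCommGroup X] [NormedSpace ℝ X] {S : ℕ}

-- The suprema on the right-hand sides of `Summing21` and `Summing2`.
def weakL1Norm (x : Fin S → X) : ℝ :=
  sSup {r : ℝ | ∃ f : X →L[ℝ] ℝ, ‖f‖ ≤ 1 ∧ r = ∑ s, |f (x s)|}

def weakL2Norm (x : Fin S → X) : ℝ :=
  sSup {r : ℝ | ∃ f : X →L[ℝ] ℝ, ‖f‖ ≤ 1 ∧ r = √(∑ s, |f (x s)| ^ 2)}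

lemma abs_apply_le_of_opNorm_le_one {f : X →L[ℝ] ℝ} (hf : ‖f‖ ≤ 1) (v : X) : |f v| ≤ ‖v‖ := by
  simpa using f.le_of_opNorm_le hf v

lemma le_weakL1Norm (x : Fin S → X) {f : X →L[ℝ] ℝ} (hf : ‖f‖ ≤ 1) :
    ∑ s, |f (x s)| ≤ weakL1Norm x := by
  refine le_csSup ⟨∑ s, ‖x s‖, ?_⟩ ⟨f, hf, rfl⟩
  rintro _ ⟨g, hg, rfl⟩
  exact sum_le_sum fun s _ => abs_apply_le_of_opNorm_le_one hg _

lemma le_weakL2Norm (x : Fin S → X) {f : X →L[ℝ] ℝ} (hf : ‖f‖ ≤ 1) :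
    √(∑ s, |f (x s)| ^ 2) ≤ weakL2Norm x := by
  refine le_csSup ⟨√(∑ s, ‖x s‖ ^ 2), ?_⟩ ⟨f, hf, rfl⟩
  rintro _ ⟨g, hg, rfl⟩
  gcongr with s
  exact abs_apply_le_of_opNorm_le_one hg _

lemma weakL1Norm_nonneg (x : Fin S → X) : 0 ≤ weakL1Norm x := by
  simpa using le_weakL1Norm x (f := 0) (by simp)

lemma weakL2Norm_nonneg (x : Fin S → X) : 0 ≤ weakL2Norm x := by
  simpa using le_weakL2Norm x (f := 0) (by simp)

lemma weakL2Norm_le_sqrt {x : Fin S → X} {a : ℝ}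
    (h : ∀ f : X →L[ℝ] ℝ, ‖f‖ ≤ 1 → ∑ s, |f (x s)| ^ 2 ≤ a) : weakL2Norm x ≤ √a :=
  csSup_le ⟨_, 0, by simp, rfl⟩ fun _ ⟨f, hf, hr⟩ => hr ▸ Real.sqrt_le_sqrt (h f hf)

lemma Summing2.sqrt_mul_le_mul_weakL2Norm {Y : Type*} [NormedAddCommGroup Y] [NormedSpace ℝ Y]
    {T : X →L[ℝ] Y} {C a : ℝ} (hT : Summing2 T C) (x : Fin S → X) (ha : 0 ≤ a)
    (hx : ∀ s, a ≤ ‖T (x s)‖) : √S * a ≤ C * weakL2Norm x :=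
  calc √S * a = √(∑ _s : Fin S, a ^ 2) := by
        rw [sum_const, card_univ, Fintype.card_fin, nsmul_eq_mul, Real.sqrt_mul (by positivity),
          Real.sqrt_sq ha]
    _ ≤ √(∑ s, ‖T (x s)‖ ^ 2) := by gcongr with s; exact hx s
    _ ≤ C * weakL2Norm x := hT S x

end WeakNorms

section SupNorm

variable {N S : ℕ}

lemma norm_proj_le_one (k : Fin N) :
    ‖(ContinuousLinearMap.proj k : (Fin N → ℝ) →L[ℝ] ℝ)‖ ≤ 1 :=
  ContinuousLinearMap.opNorm_le_bound _ zero_le_one fun v => by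
    simpa using norm_le_pi_norm v k

lemma sq_norm_le_sum_sq (v : Fin N → ℝ) : ‖v‖ ^ 2 ≤ ∑ k, v k ^ 2 := by
  refine Real.le_sqrt (norm_nonneg v) (by positivity) |>.1 ?_
  refine (pi_norm_le_iff_of_nonneg (Real.sqrt_nonneg _)).2 fun k => ?_
  exact Real.abs_le_sqrt
    (single_le_sum (f := fun k => v k ^ 2) (fun _ _ => sq_nonneg _) (mem_univ k))

lemma apply_eq_sum_mul_apply_single (f : (Fin N → ℝ) →L[ℝ] ℝ) (v : Fin N → ℝ) :
    f v = ∑ k, v k * f (Pi.single k 1) := by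
  conv_lhs => rw [pi_eq_sum_univ' v]
  simp [map_sum]

lemma sum_abs_apply_single_le (f : (Fin N → ℝ) →L[ℝ] ℝ) :
    ∑ k, |f (Pi.single k 1)| ≤ ‖f‖ := by
  set z : Fin N → ℝ := fun k => SignType.sign (f (Pi.single k 1))
  have hz : ‖z‖ ≤ 1 := (pi_norm_le_iff_of_nonneg zero_le_one).2 fun k => by
    rcases lt_trichotomy (f (Pi.single k 1)) 0 with h | h | h <;> simp [z, h]
  calc ∑ k, |f (Pi.single k 1)| = f z := by
        simp only [apply_eq_sum_mul_apply_single f z, z, sign_mul_self]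
    _ ≤ ‖f‖ * ‖z‖ := (le_abs_self _).trans (f.le_opNorm z)
    _ ≤ ‖f‖ := mul_le_of_le_one_right (norm_nonneg f) hz

lemma sq_apply_le_sum_abs_mul_sq {f : (Fin N → ℝ) →L[ℝ] ℝ} (hf : ‖f‖ ≤ 1) (v : Fin N → ℝ) :
    f v ^ 2 ≤ ∑ k, |f (Pi.single k 1)| * v k ^ 2 := by
  set c : Fin N → ℝ := fun k => |f (Pi.single k 1)|
  have hc : ∑ k, c k ≤ 1 := (sum_abs_apply_single_le f).trans hf
  calc f v ^ 2 ≤ (∑ k, c k * |v k|) ^ 2 := by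
        rw [← sq_abs, apply_eq_sum_mul_apply_single f v]
        gcongr
        refine (abs_sum_le_sum_abs _ _).trans_eq (sum_congr rfl fun k _ => ?_)
        rw [abs_mul, mul_comm]
    _ ≤ (∑ k, c k) * ∑ k, c k * v k ^ 2 :=
        sum_sq_le_sum_mul_sum_of_sq_le_mul _ (fun k _ => abs_nonneg _)
          (fun k _ => by positivity) fun k _ => le_of_eq (by rw [mul_pow, sq_abs (v k)]; ring)
    _ ≤ ∑ k, c k * v k ^ 2 := mul_le_of_le_one_left (by positivity) hc

lemma weakL2Norm_le_sqrt_of_sum_sq_le {x : Fin S → Fin N → ℝ} {a : ℝ} (ha : 0 ≤ a)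
    (h : ∀ k, ∑ s, x s k ^ 2 ≤ a) : weakL2Norm x ≤ √a := by
  refine weakL2Norm_le_sqrt fun f hf => ?_
  calc ∑ s, |f (x s)| ^ 2 ≤ ∑ s, ∑ k, |f (Pi.single k 1)| * x s k ^ 2 := by
        simp only [sq_abs]
        exact sum_le_sum fun s _ => sq_apply_le_sum_abs_mul_sq hf (x s)
    _ = ∑ k, |f (Pi.single k 1)| * ∑ s, x s k ^ 2 := by
        rw [sum_comm]; simp only [mul_sum]
    _ ≤ ∑ k, |f (Pi.single k 1)| * a := by gcongr with k; exact h k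
    _ ≤ a := by
        rw [← sum_mul]
        exact mul_le_of_le_one_left ha ((sum_abs_apply_single_le f).trans hf)

lemma sum_abs_le_weakL1Norm (x : Fin S → Fin N → ℝ) (k : Fin N) :
    ∑ s, |x s k| ≤ weakL1Norm x :=
  le_weakL1Norm x (norm_proj_le_one k)

lemma sum_sq_le_weakL2Norm_sq (x : Fin S → Fin N → ℝ) (k : Fin N) :
    ∑ s, x s k ^ 2 ≤ weakL2Norm x ^ 2 := by
  have := le_weakL2Norm x (norm_proj_le_one k)
  simp only [ContinuousLinearMap.proj_apply, sq_abs] at this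
  exact (Real.sqrt_le_iff.1 this).2

variable {Y : Type*} [NormedAddCommGroup Y] [NormedSpace ℝ Y]

lemma summing2_sqrt_mul_opNorm (T : (Fin N → ℝ) →L[ℝ] Y) : Summing2 T (√N * ‖T‖) := by
  intro S x
  change _ ≤ _ * weakL2Norm x
  set W := weakL2Norm x
  have hW : 0 ≤ W := weakL2Norm_nonneg x
  calc √(∑ s, ‖T (x s)‖ ^ 2) ≤ √(∑ s, ‖T‖ ^ 2 * ∑ k, x s k ^ 2) := by
        gcongr with s
        calc ‖T (x s)‖ ^ 2 ≤ (‖T‖ * ‖x s‖) ^ 2 := by gcongr; exact T.le_opNorm _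
          _ ≤ ‖T‖ ^ 2 * ∑ k, x s k ^ 2 := by rw [mul_pow]; gcongr; exact sq_norm_le_sum_sq _
    _ = √(‖T‖ ^ 2 * ∑ k, ∑ s, x s k ^ 2) := by rw [← mul_sum, sum_comm]
    _ ≤ √(‖T‖ ^ 2 * ∑ _k : Fin N, W ^ 2) := by
        gcongr with k; exact sum_sq_le_weakL2Norm_sq x k
    _ = √N * ‖T‖ * W := by
        rw [sum_const, card_univ, Fintype.card_fin, nsmul_eq_mul,
          show ‖T‖ ^ 2 * (N * W ^ 2) = N * (‖T‖ * W) ^ 2 by ring, Real.sqrt_mul (by positivity),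
          Real.sqrt_sq (by positivity), mul_assoc]

lemma summing21_of_sq_norm_le {T : (Fin N → ℝ) →L[ℝ] Y} {M : ℝ} (hM : 0 ≤ M)
    (hT : ∀ v, ‖T v‖ ^ 2 ≤ M ^ 2 * (‖v‖ * ∑ k, |v k|)) : Summing21 T (M * √N) := by
  intro S x
  change _ ≤ _ * weakL1Norm x
  set A := weakL1Norm x
  have hA := weakL1Norm_nonneg x
  have hxA : ∀ s, ‖x s‖ ≤ A := fun s => (pi_norm_le_iff_of_nonneg hA).2 fun k =>
    (single_le_sum (f := fun s => |x s k|) (fun _ _ => abs_nonneg _) (mem_univ s)).trans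
      (sum_abs_le_weakL1Norm x k)
  calc √(∑ s, ‖T (x s)‖ ^ 2) ≤ √(∑ s, M ^ 2 * (A * ∑ k, |x s k|)) := by
        gcongr with s
        exact (hT (x s)).trans (by gcongr; exact hxA s)
    _ = √(M ^ 2 * A * ∑ k, ∑ s, |x s k|) := by
        rw [sum_comm, mul_sum]; simp only [mul_sum, mul_assoc]
    _ ≤ √(M ^ 2 * A * ∑ _k : Fin N, A) := by
        gcongr with k; exact sum_abs_le_weakL1Norm x k
    _ = M * √N * A := by
        rw [sum_const, card_univ, Fintype.card_fin, nsmul_eq_mul,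
          show M ^ 2 * A * (N * A) = N * (M * A) ^ 2 by ring, Real.sqrt_mul (by positivity),
          Real.sqrt_sq (by positivity)]
        ring

end SupNorm

section LorentzWeight

def lorentzWeight (k : ℕ) : ℝ := √(k + 1) - √k

lemma lorentzWeight_eq_inv (k : ℕ) : lorentzWeight k = (√(k + 1) + √k)⁻¹ := by
  have h1 : √((k : ℝ) + 1) ^ 2 = k + 1 := Real.sq_sqrt (by positivity)
  have h2 : √(k : ℝ) ^ 2 = k := Real.sq_sqrt (by positivity)
  refine eq_inv_of_mul_eq_one_left ?_
  rw [lorentzWeight]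
  linear_combination h1 - h2

lemma lorentzWeight_nonneg (k : ℕ) : 0 ≤ lorentzWeight k := by
  rw [lorentzWeight_eq_inv]; positivity

lemma lorentzWeight_zero : lorentzWeight 0 = 1 := by simp [lorentzWeight]

lemma lorentzWeight_antitone : Antitone lorentzWeight := fun k m hkm => by
  simp only [lorentzWeight_eq_inv]
  have : (k : ℝ) ≤ m := by exact_mod_cast hkm
  gcongr

lemma lorentzWeight_le_one (k : ℕ) : lorentzWeight k ≤ 1 :=
  lorentzWeight_zero ▸ lorentzWeight_antitone k.zero_le

lemma lorentzWeight_le_inv_two_mul_sqrt {K : ℕ} (hK : 0 < K) :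
    lorentzWeight K ≤ (2 * √K)⁻¹ := by
  rw [lorentzWeight_eq_inv]
  have : √(K : ℝ) ≤ √(K + 1) := Real.sqrt_le_sqrt (by linarith)
  gcongr
  linarith

lemma inv_two_mul_sqrt_le_lorentzWeight (k : ℕ) : (2 * √(k + 1))⁻¹ ≤ lorentzWeight k := by
  rw [lorentzWeight_eq_inv]
  have : √(k : ℝ) ≤ √(k + 1) := Real.sqrt_le_sqrt (by linarith)
  gcongr
  linarith

lemma sum_range_lorentzWeight (K : ℕ) : ∑ j ∈ range K, lorentzWeight j = √K := by
  simpa [lorentzWeight] using sum_range_sub (fun i : ℕ => √i) K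

lemma sum_lorentzWeight_mul_le {N : ℕ} {a : Fin N → ℝ} {B : ℝ} (hB : 0 ≤ B)
    (ha : ∀ k, a k ∈ Set.Icc 0 B) (K : ℕ) :
    ∑ k : Fin N, lorentzWeight k * a k ≤ B * √K + lorentzWeight K * ∑ k, a k := by
  have hhead : ∑ k : Fin N, (if (k : ℕ) < K then lorentzWeight k else 0) ≤ √K := by
    rw [Fin.sum_univ_eq_sum_range (fun j => if j < K then lorentzWeight j else 0), ← sum_filter,
      ← sum_range_lorentzWeight]
    refine sum_le_sum_of_subset_of_nonneg (fun j hj => ?_) fun j _ _ => lorentzWeight_nonneg j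
    simpa using (mem_filter.1 hj).2
  calc ∑ k : Fin N, lorentzWeight k * a k
      ≤ ∑ k : Fin N,
          (B * (if (k : ℕ) < K then lorentzWeight k else 0) + lorentzWeight K * a k) := by
        refine sum_le_sum fun k _ => ?_
        obtain ⟨ha0, haB⟩ := ha k
        split_ifs with hk
        · nlinarith [lorentzWeight_nonneg k, lorentzWeight_nonneg K]
        · nlinarith [lorentzWeight_antitone (not_lt.1 hk)]
    _ ≤ B * √K + lorentzWeight K * ∑ k, a k := by
        rw [sum_add_distrib, ← mul_sum, ← mul_sum]
        gcongr

end LorentzWeight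

section LorentzNorm

variable {N : ℕ}

def lorentzNorm (x : Fin N → ℝ) : ℝ :=
  univ.sup' univ_nonempty fun π : Equiv.Perm (Fin N) => ∑ k : Fin N, lorentzWeight k * |x (π k)|

lemma le_lorentzNorm (x : Fin N → ℝ) (π : Equiv.Perm (Fin N)) :
    ∑ k : Fin N, lorentzWeight k * |x (π k)| ≤ lorentzNorm x :=
  le_sup' (fun π : Equiv.Perm (Fin N) => ∑ k : Fin N, lorentzWeight k * |x (π k)|) (mem_univ π)

lemma lorentzNorm_le {x : Fin N → ℝ} {a : ℝ}
    (h : ∀ π : Equiv.Perm (Fin N), ∑ k : Fin N, lorentzWeight k * |x (π k)| ≤ a) :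
    lorentzNorm x ≤ a :=
  sup'_le _ _ fun π _ => h π

lemma lorentzNorm_nonneg (x : Fin N → ℝ) : 0 ≤ lorentzNorm x :=
  (sum_nonneg fun (k : Fin N) _ => mul_nonneg (lorentzWeight_nonneg k) (abs_nonneg _)).trans
    (le_lorentzNorm x 1)

lemma abs_le_lorentzNorm (x : Fin N → ℝ) (j : Fin N) : |x j| ≤ lorentzNorm x := by
  let z : Fin N := ⟨0, j.pos⟩
  calc |x j| = lorentzWeight z * |x (Equiv.swap z j z)| := by simp [z, lorentzWeight_zero]
    _ ≤ ∑ k : Fin N, lorentzWeight k * |x (Equiv.swap z j k)| :=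
        single_le_sum (f := fun k : Fin N => lorentzWeight k * |x (Equiv.swap z j k)|)
          (fun k _ => mul_nonneg (lorentzWeight_nonneg k) (abs_nonneg _)) (mem_univ z)
    _ ≤ lorentzNorm x := le_lorentzNorm x _

lemma lorentzNorm_add_le (x y : Fin N → ℝ) : lorentzNorm (x + y) ≤ lorentzNorm x + lorentzNorm y :=
  lorentzNorm_le fun π => by
    calc ∑ k : Fin N, lorentzWeight k * |(x + y) (π k)|
        ≤ ∑ k : Fin N, (lorentzWeight k * |x (π k)| + lorentzWeight k * |y (π k)|) := by
          gcongr with k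
          rw [← mul_add]
          exact mul_le_mul_of_nonneg_left (abs_add_le _ _) (lorentzWeight_nonneg k)
      _ ≤ lorentzNorm x + lorentzNorm y := by
          rw [sum_add_distrib]; exact add_le_add (le_lorentzNorm x π) (le_lorentzNorm y π)

lemma lorentzNorm_neg (x : Fin N → ℝ) : lorentzNorm (-x) = lorentzNorm x := by
  simp [lorentzNorm]

lemma lorentzNorm_smul_le (a : ℝ) (x : Fin N → ℝ) : lorentzNorm (a • x) ≤ |a| * lorentzNorm x :=
  lorentzNorm_le fun π => by
    calc ∑ k : Fin N, lorentzWeight k * |(a • x) (π k)|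
        = |a| * ∑ k : Fin N, lorentzWeight k * |x (π k)| := by
          rw [mul_sum]
          refine sum_congr rfl fun k _ => ?_
          rw [Pi.smul_apply, smul_eq_mul, abs_mul]
          ring
      _ ≤ |a| * lorentzNorm x := by gcongr; exact le_lorentzNorm x π

lemma lorentzNorm_le_sum_abs (x : Fin N → ℝ) : lorentzNorm x ≤ ∑ k, |x k| :=
  lorentzNorm_le fun π =>
    (sum_le_sum fun (k : Fin N) _ =>
      mul_le_of_le_one_left (abs_nonneg _) (lorentzWeight_le_one k)).trans_eq
        (Equiv.sum_comp π fun k => |x k|)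

lemma lorentzNorm_le_norm_mul_sqrt_add {K : ℕ} (hK : 0 < K) (x : Fin N → ℝ) :
    lorentzNorm x ≤ ‖x‖ * √K + (∑ k, |x k|) / (2 * √K) :=
  lorentzNorm_le fun π => by
    have ha : ∀ k, |x (π k)| ∈ Set.Icc 0 ‖x‖ := fun k =>
      ⟨abs_nonneg _, by simpa using norm_le_pi_norm x (π k)⟩
    calc ∑ k : Fin N, lorentzWeight k * |x (π k)|
        ≤ ‖x‖ * √K + lorentzWeight K * ∑ k, |x (π k)| :=
          sum_lorentzWeight_mul_le (norm_nonneg x) ha K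
      _ ≤ ‖x‖ * √K + (∑ k, |x k|) / (2 * √K) := by
          rw [Equiv.sum_comp π fun k => |x k|, div_eq_inv_mul]
          gcongr
          exact lorentzWeight_le_inv_two_mul_sqrt hK

lemma lorentzNorm_sq_le (x : Fin N → ℝ) : lorentzNorm x ^ 2 ≤ 4 * (‖x‖ * ∑ k, |x k|) := by
  rcases (norm_nonneg x).eq_or_lt with hB | hB
  · obtain rfl : x = 0 := norm_eq_zero.1 hB.symm
    have hG := lorentzNorm_le_sum_abs (0 : Fin N → ℝ)
    simp only [Pi.zero_apply, abs_zero, sum_const_zero] at hG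
    simp [le_antisymm hG (lorentzNorm_nonneg 0)]
  set B := ‖x‖
  set L := ∑ k, |x k|
  have hBL : B ≤ L := (pi_norm_le_iff_of_nonneg (by positivity)).2 fun k => by
    simpa using single_le_sum (f := fun k => |x k|) (fun _ _ => abs_nonneg _) (mem_univ k)
  -- the threshold `K ≈ L / B` balances the two terms of `lorentzNorm_le_norm_mul_sqrt_add`
  set K := ⌈L / B⌉₊
  have hLK : L ≤ B * K := by
    rw [← div_le_iff₀' hB]; exact Nat.le_ceil _
  have hKL : B * K ≤ 2 * L := by
    have hceil := Nat.ceil_lt_add_one (div_nonneg (hB.le.trans hBL) hB.le)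
    calc B * K ≤ B * (L / B + 1) := by gcongr
      _ = L + B := by field_simp
      _ ≤ 2 * L := by linarith
  have hK : 0 < K := Nat.ceil_pos.2 (div_pos (hB.trans_le hBL) hB)
  have hKr : (0 : ℝ) < K := by exact_mod_cast hK
  calc lorentzNorm x ^ 2 ≤ (B * √K + L / (2 * √K)) ^ 2 := by
        gcongr
        exacts [lorentzNorm_nonneg x, lorentzNorm_le_norm_mul_sqrt_add hK x]
    _ = B * (B * K) + B * L + L * L / (4 * K) := by
        rw [add_sq, mul_pow, div_pow, mul_pow, Real.sq_sqrt hKr.le]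
        field_simp
        ring
    _ ≤ B * (2 * L) + B * L + L * (B * K) / (4 * K) := by gcongr
    _ ≤ 4 * (B * L) := by
        rw [mul_div_assoc, mul_div_mul_comm, div_self hKr.ne']
        nlinarith

end LorentzNorm

/-- `ℓ_{2,1}^N`: a type synonym for `Fin N → ℝ`, so that it carries `lorentzNorm` instead of the
sup norm. -/
def Lorentz21 (N : ℕ) : Type := Fin N → ℝ

namespace Lorentz21

variable {N : ℕ}

instance : AddCommGroup (Lorentz21 N) := inferInstanceAs (AddCommGroup (Fin N → ℝ))

instance : Module ℝ (Lorentz21 N) := inferInstanceAs (Module ℝ (Fin N → ℝ))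

instance : NormedAddCommGroup (Lorentz21 N) :=
  AddGroupNorm.toNormedAddCommGroup
    { toFun := lorentzNorm
      map_zero' := le_antisymm ((lorentzNorm_le_sum_abs 0).trans_eq (by simp))
        (lorentzNorm_nonneg 0)
      add_le' := lorentzNorm_add_le
      neg' := lorentzNorm_neg
      eq_zero_of_map_eq_zero' := fun x hx =>
        funext fun j => abs_nonpos_iff.1 (hx ▸ abs_le_lorentzNorm x j) }

instance : NormedSpace ℝ (Lorentz21 N) := ⟨lorentzNorm_smul_le⟩

instance : FiniteDimensional ℝ (Lorentz21 N) := inferInstanceAs (FiniteDimensional ℝ (Fin N → ℝ))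

instance : CompleteSpace (Lorentz21 N) := FiniteDimensional.complete ℝ _

def ofPi : (Fin N → ℝ) →L[ℝ] Lorentz21 N :=
  LinearMap.toContinuousLinearMap
    { toFun := fun x => x
      map_add' := fun _ _ => rfl
      map_smul' := fun _ _ => rfl }

lemma norm_ofPi (x : Fin N → ℝ) : ‖ofPi x‖ = lorentzNorm x := rfl

lemma ofPi_ne_zero [NeZero N] : (ofPi : (Fin N → ℝ) →L[ℝ] Lorentz21 N) ≠ 0 := fun h => by
  have h1 := abs_le_lorentzNorm (fun _ : Fin N => (1 : ℝ)) 0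
  rw [← norm_ofPi, h] at h1
  norm_num at h1

lemma summing21_ofPi : Summing21 (ofPi : (Fin N → ℝ) →L[ℝ] Lorentz21 N) (2 * √N) :=
  summing21_of_sq_norm_le zero_le_two fun v => by
    rw [norm_ofPi]; exact (lorentzNorm_sq_le v).trans_eq (by norm_num)

end Lorentz21

lemma harmonic_eq_sum_fin (N : ℕ) : (harmonic N : ℝ) = ∑ k : Fin N, ((k : ℕ) + 1 : ℝ)⁻¹ := by
  rw [Fin.sum_univ_eq_sum_range (fun i => ((i : ℝ) + 1)⁻¹) N, harmonic]
  push_cast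
  rfl

section HarmonicFamily

variable {N : ℕ} [NeZero N]

def cyclicInvSqrt (N : ℕ) (s k : Fin N) : ℝ := (√(((k + s : Fin N) : ℕ) + 1))⁻¹

lemma sum_sq_cyclicInvSqrt (k : Fin N) : ∑ s, cyclicInvSqrt N s k ^ 2 = harmonic N := by
  calc ∑ s, cyclicInvSqrt N s k ^ 2 = ∑ t : Fin N, (√((t : ℕ) + 1 : ℝ))⁻¹ ^ 2 :=
        Equiv.sum_comp (Equiv.addLeft k) fun t : Fin N => (√((t : ℕ) + 1 : ℝ))⁻¹ ^ 2
    _ = harmonic N := by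
        rw [harmonic_eq_sum_fin]
        refine sum_congr rfl fun t _ => ?_
        rw [inv_pow, Real.sq_sqrt (by positivity)]

lemma harmonic_div_two_le_lorentzNorm (s : Fin N) :
    (harmonic N : ℝ) / 2 ≤ lorentzNorm (cyclicInvSqrt N s) := by
  refine le_trans ?_ (le_lorentzNorm _ (Equiv.subRight s))
  rw [harmonic_eq_sum_fin, sum_div]
  refine sum_le_sum fun k _ => ?_
  have hk : (0 : ℝ) < (k : ℕ) + 1 := by positivity
  calc ((k : ℕ) + 1 : ℝ)⁻¹ / 2 = (2 * √((k : ℕ) + 1))⁻¹ * (√((k : ℕ) + 1 : ℝ))⁻¹ := by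
        rw [← mul_inv, mul_assoc, Real.mul_self_sqrt hk.le, mul_inv, mul_comm, div_eq_mul_inv]
    _ ≤ lorentzWeight k * |cyclicInvSqrt N s (Equiv.subRight s k)| := by
        rw [cyclicInvSqrt, Equiv.subRight_apply, sub_add_cancel, abs_of_nonneg (by positivity)]
        gcongr
        exact inv_two_mul_sqrt_le_lorentzWeight k

end HarmonicFamily

lemma logb_two_le_two_mul_harmonic (N : ℕ) : Real.logb 2 N ≤ 2 * harmonic N := by
  rcases N.eq_zero_or_pos with rfl | hN
  · simp
  have hlogN : Real.log N ≤ harmonic N := by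
    have := log_add_one_le_harmonic N
    push_cast at this
    exact (Real.log_le_log (by exact_mod_cast hN) (by linarith)).trans this
  have hlog2 := Real.log_two_gt_d9
  rw [Real.logb, div_le_iff₀ (by linarith)]
  nlinarith [Real.log_natCast_nonneg N]

namespace Lorentz21

lemma sqrt_mul_sqrt_harmonic_le_sInf_summing2 {N : ℕ} [NeZero N] :
    √N * √(harmonic N) / 2 ≤
      sInf {C : ℝ | 0 ≤ C ∧ Summing2 (ofPi : (Fin N → ℝ) →L[ℝ] Lorentz21 N) C} := by
  have hH : (0 : ℝ) < harmonic N := by exact_mod_cast harmonic_pos (NeZero.ne N)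
  refine le_csInf ⟨_, by positivity, summing2_sqrt_mul_opNorm ofPi⟩ ?_
  rintro C ⟨hC0, hC⟩
  have hlow := hC.sqrt_mul_le_mul_weakL2Norm (cyclicInvSqrt N) (by positivity)
    fun s => (harmonic_div_two_le_lorentzNorm s).trans_eq (norm_ofPi _).symm
  have hW : weakL2Norm (cyclicInvSqrt N) ≤ √(harmonic N) :=
    weakL2Norm_le_sqrt_of_sum_sq_le hH.le fun k => (sum_sq_cyclicInvSqrt k).le
  refine le_of_mul_le_mul_right ?_ (Real.sqrt_pos.2 hH)
  calc √N * √(harmonic N) / 2 * √(harmonic N) = √N * (harmonic N / 2) := by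
        rw [mul_div_right_comm, mul_assoc, Real.mul_self_sqrt hH.le]; ring
    _ ≤ C * √(harmonic N) := hlow.trans (by gcongr)

end Lorentz21

end

theorem stmt19 :
    ∃ c : ℝ, 0 < c ∧
      ∀ (N : ℕ), 2 ≤ N →
        ∃ (Y : Type) (_ : NormedAddCommGroup Y) (_ : NormedSpace ℝ Y)
          (_ : CompleteSpace Y) (T : (Fin N → ℝ) →L[ℝ] Y),
          T ≠ 0 ∧
          sInf {C : ℝ | 0 ≤ C ∧ Summing2 T C} ≥
            c⁻¹ * Real.sqrt (Real.logb 2 N) *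
              sInf {C : ℝ | 0 ≤ C ∧ Summing21 T C} := by
  refine ⟨8, by norm_num, fun N hN => ?_⟩
  have : NeZero N := ⟨by omega⟩
  have hH : (0 : ℝ) < harmonic N := by exact_mod_cast harmonic_pos (NeZero.ne N)
  refine ⟨Lorentz21 N, inferInstance, inferInstance, inferInstance, Lorentz21.ofPi,
    Lorentz21.ofPi_ne_zero, ?_⟩
  have hlog : √(Real.logb 2 N) ≤ 2 * √(harmonic N) :=
    calc √(Real.logb 2 N) ≤ √(2 ^ 2 * harmonic N) :=
          Real.sqrt_le_sqrt (by linarith [logb_two_le_two_mul_harmonic N])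
      _ = 2 * √(harmonic N) := by rw [Real.sqrt_mul (by positivity), Real.sqrt_sq zero_le_two]
  have h21 : sInf {C : ℝ | 0 ≤ C ∧ Summing21 (Lorentz21.ofPi (N := N)) C} ≤ 2 * √N :=
    csInf_le ⟨0, fun _ h => h.1⟩ ⟨by positivity, Lorentz21.summing21_ofPi⟩
  calc 8⁻¹ * √(Real.logb 2 N) * sInf {C : ℝ | 0 ≤ C ∧ Summing21 Lorentz21.ofPi C}
      ≤ 8⁻¹ * (2 * √(harmonic N)) * (2 * √N) := by
        gcongr
        exact Real.sInf_nonneg fun _ h => h.1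
    _ = √N * √(harmonic N) / 2 := by ring
    _ ≤ _ := Lorentz21.sqrt_mul_sqrt_harmonic_le_sInf_summing2
end
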